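/- arXiv:math/0512221 — 4 statements merged into one kernel-verified Lean document; each statement's English description precedes it below -/
import Mathlib

section
/- Let X be a metric space and P a transition function on X. Suppose (Kᵢ)_{i≥1} is a sequence of compact subsets of X that are pairwise ε/3-separated (dist(Kᵢ, Kⱼ) ≥ ε/3 for i ≠ j), and suppose there exist x ∈ X, an open set O', α > 0 with limsup_{n→∞} (1/n)∑_{i=1}^n Pⁱ(x, O') > α, and i₀, plus integers (qᵢ) with inf{P^{qᵢ}(y, Kᵢ^{ε/12}) : y ∈ O', i ≥ i₀} ≥ ε/2. Then for every N ≥ i₀, limsup_{n→∞} (1/n)∑_{i=1}^n Pⁱ(x, ⋃_{j=i₀}^N Kⱼ^{ε/12}) ≥ (N − i₀)αε/2; since the left side is bounded by 1, this is a contradiction for N large, so no such O' and i₀ exist. -/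
open MeasureTheory Filter Topology Metric
open scoped ENNReal

noncomputable def stepN {X : Type*} [MeasurableSpace X] (P : X → Measure X) :
    ℕ → X → Measure X
  | 0, x => Measure.dirac x
  | n + 1, x => (stepN P n x).bind P

lemma stepN_measurable {X : Type*} [MeasurableSpace X] (P : X → Measure X)
    (hP : Measurable P) : ∀ n, Measurable (stepN P n)
  | 0 => Measure.measurable_dirac
  | n + 1 => (Measure.measurable_bind' hP).comp (stepN_measurable P hP n)

lemma stepN_univ {X : Type*} [MeasurableSpace X] (P : X → Measure X)
    (hP : Measurable P) (hprob : ∀ x, IsProbabilityMeasure (P x)) :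
    ∀ n x, stepN P n x Set.univ = 1
  | 0, x => by simp [stepN]
  | n + 1, x => by
    rw [stepN, Measure.bind_apply MeasurableSet.univ hP.aemeasurable]
    simp only [measure_univ]
    rw [lintegral_one, stepN_univ P hP hprob n x]

lemma stepN_add {X : Type*} [MeasurableSpace X] (P : X → Measure X)
    (hP : Measurable P) : ∀ (m n : ℕ) (x : X),
      stepN P (m + n) x = (stepN P m x).bind (stepN P n)
  | m, 0, x => by
    simp only [Nat.add_zero]
    exact (Measure.bind_dirac).symm
  | m, n + 1, x => by
    show (stepN P (m + n) x).bind P = _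
    rw [stepN_add P hP m n x, Measure.bind_bind (stepN_measurable P hP n).aemeasurable hP.aemeasurable]
    rfl

/-- For a sequence of pairwise ε/3-separated compact sets `Kᵢ`, if the Cesàro
averages of `Pⁱ(x, O')` have limsup `> α` while `P^{qᵢ}(y, Kᵢ^{ε/12}) ≥ ε/2` for all
`y ∈ O'` and `i ≥ i₀`, then for every `N ≥ i₀` the limsup of the Cesàro averages of
`Pⁱ(x, ⋃_{j=i₀}^N Kⱼ^{ε/12})` is at least `(N−i₀)αε/2`; since these averages are bounded
by 1, this is contradictory, so no such `O'` and `i₀` exist. -/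
theorem stmt5 {X : Type*} [MetricSpace X] [MeasurableSpace X] [BorelSpace X]
    (P : X → Measure X) (hP : Measurable P) (hprob : ∀ x, IsProbabilityMeasure (P x))
    (ε : ℝ) (hε : 0 < ε) (K : ℕ → Set X) (hK : ∀ i, IsCompact (K i))
    (hsep : ∀ i j, i ≠ j → ∀ x ∈ K i, ∀ y ∈ K j, ε / 3 ≤ dist x y)
    (x : X) (O' : Set X) (hO' : IsOpen O') (α : ℝ) (hα : 0 < α)
    (hls : α < Filter.limsup
      (fun n : ℕ => (1 / (n : ℝ)) * ∑ i ∈ Finset.Icc 1 n, (stepN P i x O').toReal) atTop)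
    (i₀ : ℕ) (q : ℕ → ℕ)
    (hq : ∀ y ∈ O', ∀ i, i₀ ≤ i →
      ε / 2 ≤ (stepN P (q i) y (Metric.thickening (ε / 12) (K i))).toReal) :
    (∀ N, i₀ ≤ N →
      ((N : ℝ) - (i₀ : ℝ)) * α * ε / 2 ≤ Filter.limsup
        (fun n : ℕ => (1 / (n : ℝ)) * ∑ i ∈ Finset.Icc 1 n,
          (stepN P i x (⋃ j ∈ Finset.Icc i₀ N, Metric.thickening (ε / 12) (K j))).toReal)
        atTop) ∧ False := by
  set A : ℕ → Set X := fun j => Metric.thickening (ε / 12) (K j) with hA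
  have hAmeas : ∀ j, MeasurableSet (A j) := fun j => isOpen_thickening.measurableSet
  have hone : ∀ n y, stepN P n y Set.univ = 1 := stepN_univ P hP hprob
  have hfin : ∀ n y (s : Set X), stepN P n y s ≠ ∞ := by
    intro n y s
    exact ne_top_of_le_ne_top (by rw [hone]; exact ENNReal.one_ne_top)
      (measure_mono (Set.subset_univ s))
  have hle1 : ∀ n y (s : Set X), (stepN P n y s).toReal ≤ 1 := by
    intro n y s
    have h := measure_mono (μ := stepN P n y) (Set.subset_univ s)
    rw [hone] at h
    simpa using ENNReal.toReal_mono ENNReal.one_ne_top h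
  -- key inequality
  have key : ∀ j, i₀ ≤ j → ∀ m,
      ε / 2 * (stepN P m x O').toReal ≤ (stepN P (m + q j) x (A j)).toReal := by
    intro j hj m
    have h1 : stepN P (m + q j) x (A j)
        = ∫⁻ y, stepN P (q j) y (A j) ∂(stepN P m x) := by
      rw [stepN_add P hP m (q j) x, Measure.bind_apply (hAmeas j) (stepN_measurable P hP (q j)).aemeasurable]
    have h2 : ENNReal.ofReal (ε / 2) * stepN P m x O'
        ≤ ∫⁻ y, stepN P (q j) y (A j) ∂(stepN P m x) := by
      rw [← lintegral_indicator_const hO'.measurableSet]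
      refine lintegral_mono fun y => ?_
      by_cases hy : y ∈ O'
      · rw [Set.indicator_of_mem hy]
        calc ENNReal.ofReal (ε / 2)
            ≤ ENNReal.ofReal ((stepN P (q j) y (A j)).toReal) :=
              ENNReal.ofReal_le_ofReal (hq y hy j hj)
          _ = stepN P (q j) y (A j) := ENNReal.ofReal_toReal (hfin _ _ _)
      · simp [Set.indicator_of_notMem hy]
    rw [← h1] at h2
    have h3 := ENNReal.toReal_mono (hfin _ _ _) h2
    rwa [ENNReal.toReal_mul, ENNReal.toReal_ofReal (by positivity)] at h3
  -- disjointness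
  have hdisj : ∀ i j, i ≠ j → Disjoint (A i) (A j) := by
    intro i j hij
    rw [Set.disjoint_left]
    intro z hzi hzj
    obtain ⟨a, ha, hda⟩ := Metric.mem_thickening_iff.1 hzi
    obtain ⟨b, hb, hdb⟩ := Metric.mem_thickening_iff.1 hzj
    have hab := hsep i j hij a ha b hb
    have htri : dist a b ≤ dist z a + dist z b := by
      rw [dist_comm z a]; exact dist_triangle a z b
    linarith
  refine (?_ : False).elim
  -- choose N
  set c : ℕ := ⌈4 / (ε * α)⌉₊ with hc
  set N : ℕ := i₀ + c with hN
  set M : ℕ := (Finset.Icc i₀ N).card with hM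
  have hMval : M = c + 1 := by
    rw [hM, Nat.card_Icc]; omega
  have hεα : 0 < ε * α := mul_pos hε hα
  have hMge : 4 / (ε * α) ≤ (M : ℝ) := by
    refine (Nat.le_ceil _).trans ?_
    rw [hMval]; push_cast; linarith
  have h2le : 2 ≤ ε / 2 * (M : ℝ) * α := by
    have h4 := (div_le_iff₀ hεα).1 hMge
    nlinarith
  set Q : ℝ := ∑ j ∈ Finset.Icc i₀ N, (q j : ℝ) with hQ
  have hQ0 : 0 ≤ Q := Finset.sum_nonneg fun j _ => by positivity
  set g : ℕ → ℝ := fun i => (stepN P i x O').toReal with hg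
  set U : Set X := ⋃ j ∈ Finset.Icc i₀ N, A j with hU
  have hUmeas : ∀ n, (stepN P n x U).toReal
      = ∑ j ∈ Finset.Icc i₀ N, (stepN P n x (A j)).toReal := by
    intro n
    rw [hU, measure_biUnion_finset (fun i _ j _ hij => hdisj i j hij) (fun j _ => hAmeas j),
      ENNReal.toReal_sum (fun j _ => hfin _ _ _)]
  -- per-j sum bound
  have perj : ∀ (n : ℕ) (j : ℕ), j ∈ Finset.Icc i₀ N →
      ε / 2 * ((∑ i ∈ Finset.Icc 1 n, g i) - (q j : ℝ))
        ≤ ∑ i ∈ Finset.Icc 1 n, (stepN P i x (A j)).toReal := by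
    intro n j hjmem
    have hj : i₀ ≤ j := (Finset.mem_Icc.1 hjmem).1
    have hstep1 : ∑ i ∈ Finset.Icc 1 (n - q j), ε / 2 * g i
        ≤ ∑ i ∈ Finset.Icc 1 n, (stepN P i x (A j)).toReal := by
      calc ∑ i ∈ Finset.Icc 1 (n - q j), ε / 2 * g i
          ≤ ∑ i ∈ Finset.Icc 1 (n - q j), (stepN P (i + q j) x (A j)).toReal :=
            Finset.sum_le_sum fun i _ => key j hj i
        _ = ∑ i ∈ (Finset.Icc 1 (n - q j)).image (· + q j),
              (stepN P i x (A j)).toReal := by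
            rw [Finset.sum_image (fun a _ b _ h => by omega)]
        _ ≤ ∑ i ∈ Finset.Icc 1 n, (stepN P i x (A j)).toReal := by
            refine Finset.sum_le_sum_of_subset_of_nonneg ?_
              (fun i _ _ => ENNReal.toReal_nonneg)
            intro i hi
            simp only [Finset.mem_image, Finset.mem_Icc] at hi ⊢
            obtain ⟨k, ⟨hk1, hk2⟩, rfl⟩ := hi
            omega
    have hstep2 : (∑ i ∈ Finset.Icc 1 n, g i) - (q j : ℝ)
        ≤ ∑ i ∈ Finset.Icc 1 (n - q j), g i := by
      have hsub : Finset.Icc 1 (n - q j) ⊆ Finset.Icc 1 n := by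
        intro i hi; simp only [Finset.mem_Icc] at hi ⊢; omega
      have hsplit := Finset.sum_sdiff hsub (f := g)
      have hcardN : (Finset.Icc 1 n \ Finset.Icc 1 (n - q j)).card ≤ q j := by
        rw [Finset.card_sdiff_of_subset hsub, Nat.card_Icc, Nat.card_Icc]; omega
      have hcard : ((Finset.Icc 1 n \ Finset.Icc 1 (n - q j)).card : ℝ) ≤ (q j : ℝ) := by
        exact_mod_cast hcardN
      have hbd : ∑ i ∈ Finset.Icc 1 n \ Finset.Icc 1 (n - q j), g i
          ≤ ((Finset.Icc 1 n \ Finset.Icc 1 (n - q j)).card : ℝ) * 1 := by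
        rw [← nsmul_eq_mul]
        exact Finset.sum_le_card_nsmul _ _ 1 fun i _ => hle1 _ _ _
      linarith
    calc ε / 2 * ((∑ i ∈ Finset.Icc 1 n, g i) - (q j : ℝ))
        ≤ ε / 2 * ∑ i ∈ Finset.Icc 1 (n - q j), g i :=
          mul_le_mul_of_nonneg_left hstep2 (by positivity)
      _ = ∑ i ∈ Finset.Icc 1 (n - q j), ε / 2 * g i := by rw [Finset.mul_sum]
      _ ≤ _ := hstep1
  -- total bound
  have total : ∀ n : ℕ,
      ε / 2 * ((M : ℝ) * (∑ i ∈ Finset.Icc 1 n, g i) - Q)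
        ≤ ∑ i ∈ Finset.Icc 1 n, (stepN P i x U).toReal := by
    intro n
    have h1 : ∑ i ∈ Finset.Icc 1 n, (stepN P i x U).toReal
        = ∑ j ∈ Finset.Icc i₀ N, ∑ i ∈ Finset.Icc 1 n, (stepN P i x (A j)).toReal := by
      simp_rw [hUmeas]
      exact Finset.sum_comm
    rw [h1]
    have h2 : ∑ j ∈ Finset.Icc i₀ N, ε / 2 * ((∑ i ∈ Finset.Icc 1 n, g i) - (q j : ℝ))
        ≤ ∑ j ∈ Finset.Icc i₀ N, ∑ i ∈ Finset.Icc 1 n, (stepN P i x (A j)).toReal :=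
      Finset.sum_le_sum fun j hj => perj n j hj
    refine le_trans (le_of_eq ?_) h2
    rw [← Finset.mul_sum, Finset.sum_sub_distrib, Finset.sum_const, ← hQ, ← hM]
    push_cast
    ring
  -- frequently
  have hfreq : ∃ᶠ n : ℕ in atTop, α < (1 / (n : ℝ)) * ∑ i ∈ Finset.Icc 1 n, g i := by
    refine frequently_lt_of_lt_limsup ?_ hls
    exact isCoboundedUnder_le_of_le atTop (x := 0) fun n =>
      mul_nonneg (by positivity) (Finset.sum_nonneg fun i _ => ENNReal.toReal_nonneg)
  have hev : ∀ᶠ n in atTop, ⌈ε * Q⌉₊ + 1 ≤ n := eventually_ge_atTop _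
  obtain ⟨n, hαn, hnge⟩ := (hfreq.and_eventually hev).exists
  have hn1 : 1 ≤ n := by omega
  have hnR : (0 : ℝ) < n := by exact_mod_cast hn1
  have hQn : ε * Q < (n : ℝ) := by
    have := Nat.le_ceil (ε * Q)
    have h2 : ((⌈ε * Q⌉₊ : ℝ) + 1) ≤ (n : ℝ) := by exact_mod_cast hnge
    linarith
  set Gn : ℝ := ∑ i ∈ Finset.Icc 1 n, g i with hGn
  have hGnα : (n : ℝ) * α < Gn := by
    have := hαn
    rw [one_div] at this
    calc (n : ℝ) * α < (n : ℝ) * ((n : ℝ)⁻¹ * Gn) := by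
          exact mul_lt_mul_of_pos_left this hnR
      _ = Gn := by field_simp
  have hFn : ∑ i ∈ Finset.Icc 1 n, (stepN P i x U).toReal ≤ (n : ℝ) := by
    have := Finset.sum_le_card_nsmul (Finset.Icc 1 n)
      (fun i => (stepN P i x U).toReal) 1 fun i _ => hle1 _ _ _
    rw [nsmul_eq_mul, Nat.card_Icc] at this
    have hn'' : (n + 1 - 1 : ℕ) = n := by omega
    have hn' : ((n + 1 - 1 : ℕ) : ℝ) = (n : ℝ) := by rw [hn'']
    calc _ ≤ ((n + 1 - 1 : ℕ) : ℝ) * 1 := this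
      _ = (n : ℝ) := by rw [hn']; ring
  have htot := total n
  have hMpos : (0 : ℝ) < M := by rw [hMval]; positivity
  have hprod1 : ε / 2 * (M : ℝ) * ((n : ℝ) * α) < ε / 2 * (M : ℝ) * Gn :=
    mul_lt_mul_of_pos_left hGnα (by positivity)
  have hprod2 : 2 * (n : ℝ) ≤ ε / 2 * (M : ℝ) * α * (n : ℝ) :=
    mul_le_mul_of_nonneg_right h2le (le_of_lt hnR)
  nlinarith [htot, hFn, hQ0, hε.le]
end

section
/- With the jump-process operator P as above and V(x) = ρ(x, x₀) for a fixed x₀ ∈ X, if ∑ᵢ pᵢ(x) ρ(wᵢ(x), wᵢ(y)) ≤ r ρ(x,y), ρ(S(t)x, S(t)y) ≤ e^{κt}ρ(x,y), γ > κ, and b̃ := sup_{t≥0, 1≤i≤N} ρ(wᵢ(S(t)x₀), x₀) < ∞, then PV(x) ≤ rγ(γ−κ)⁻¹ V(x) + N b̃ for all x ∈ X. -/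
open MeasureTheory Filter Topology Metric

lemma stmt8_aux_exp (b : ℝ) (hb : 0 < b) :
    ∫ t in Set.Ioi (0:ℝ), Real.exp (-b * t) = b⁻¹ := by
  have h := integral_comp_mul_left_Ioi (fun x => Real.exp (-x)) 0 hb
  simp only [mul_zero, integral_exp_neg_Ioi, neg_zero, Real.exp_zero, smul_eq_mul,
    mul_one] at h
  simpa [neg_mul] using h

/-- For the jump-process operator and `V(x) = ρ(x,x₀)`, under the contraction,
semigroup-growth and boundedness hypotheses one has
`PV(x) ≤ rγ(γ−κ)⁻¹ V(x) + N·b̃` for all `x`. -/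
theorem stmt8 {X : Type*} [MetricSpace X] (N : ℕ)
    (S : ℝ → X → X) (hS0 : ∀ x, S 0 x = x)
    (hSsemi : ∀ s t : ℝ, 0 ≤ s → 0 ≤ t → ∀ x, S (s + t) x = S s (S t x))
    (hScont : ∀ x, Continuous fun t => S t x)
    (w : Fin N → X → X) (hw : ∀ i, Continuous (w i))
    (p : Fin N → X → ℝ) (hpc : ∀ i, Continuous (p i))
    (hp0 : ∀ i x, 0 ≤ p i x) (hp1 : ∀ x, ∑ i, p i x = 1)
    (r κ γ : ℝ) (hr : 0 < r) (hr1 : r < 1) (hκ : 0 ≤ κ) (hγ : κ < γ)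
    (hcontr : ∀ x y, ∑ i, p i x * dist (w i x) (w i y) ≤ r * dist x y)
    (hSl : ∀ t : ℝ, 0 ≤ t → ∀ x y, dist (S t x) (S t y) ≤ Real.exp (κ * t) * dist x y)
    (x₀ : X) (btil : ℝ)
    (hbtil : ∀ t : ℝ, 0 ≤ t → ∀ i, dist (w i (S t x₀)) x₀ ≤ btil) :
    ∀ x : X, ∑ i, ∫ t in Set.Ioi (0 : ℝ),
        γ * Real.exp (-γ * t) * p i (S t x) * dist (w i (S t x)) x₀
      ≤ r * γ * (γ - κ)⁻¹ * dist x x₀ + N * btil := by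
  intro x
  have hγ0 : 0 < γ := lt_of_le_of_lt hκ hγ
  have hγκ : 0 < γ - κ := sub_pos.mpr hγ
  rcases Nat.eq_zero_or_pos N with hN | hN
  · subst hN
    simp only [Finset.univ_eq_empty, Finset.sum_empty, Nat.cast_zero, zero_mul, add_zero]
    positivity
  have hb0 : 0 ≤ btil := le_trans dist_nonneg (hbtil 0 le_rfl ⟨0, hN⟩)
  set D := dist x x₀ with hD
  have hD0 : 0 ≤ D := dist_nonneg
  -- key pointwise sum bound
  have hsum : ∀ t : ℝ, 0 ≤ t →
      ∑ i, p i (S t x) * dist (w i (S t x)) x₀ ≤ r * Real.exp (κ * t) * D + btil := by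
    intro t ht
    calc ∑ i, p i (S t x) * dist (w i (S t x)) x₀
        ≤ ∑ i, (p i (S t x) * dist (w i (S t x)) (w i (S t x₀)) + p i (S t x) * btil) := by
          apply Finset.sum_le_sum
          intro i _
          have h1 : dist (w i (S t x)) x₀ ≤ dist (w i (S t x)) (w i (S t x₀)) + btil :=
            le_trans (dist_triangle _ (w i (S t x₀)) _)
              (by linarith [hbtil t ht i])
          nlinarith [hp0 i (S t x)]
      _ = (∑ i, p i (S t x) * dist (w i (S t x)) (w i (S t x₀)))
            + (∑ i, p i (S t x)) * btil := by rw [Finset.sum_add_distrib, Finset.sum_mul]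
      _ ≤ r * dist (S t x) (S t x₀) + btil := by
          rw [hp1 (S t x), one_mul]
          exact add_le_add_left (hcontr (S t x) (S t x₀)) btil
      _ ≤ r * (Real.exp (κ * t) * D) + btil := by
          have := hSl t ht x x₀
          nlinarith
      _ = r * Real.exp (κ * t) * D + btil := by ring
  -- dominating function
  set g : ℝ → ℝ := fun t => r * D * γ * Real.exp (-(γ - κ) * t) + btil * γ * Real.exp (-γ * t)
    with hg
  have hgint : IntegrableOn g (Set.Ioi (0:ℝ)) :=
    ((exp_neg_integrableOn_Ioi 0 hγκ).const_mul (r * D * γ)).add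
      ((exp_neg_integrableOn_Ioi 0 hγ0).const_mul (btil * γ))
  set f : Fin N → ℝ → ℝ := fun i t =>
    γ * Real.exp (-γ * t) * p i (S t x) * dist (w i (S t x)) x₀ with hf
  have hle : ∀ t : ℝ, 0 ≤ t → ∑ i, f i t ≤ g t := by
    intro t ht
    have h1 : ∑ i, f i t = γ * Real.exp (-γ * t) * ∑ i, p i (S t x) * dist (w i (S t x)) x₀ := by
      rw [Finset.mul_sum]; exact Finset.sum_congr rfl fun i _ => by ring
    have h2 : (0:ℝ) < γ * Real.exp (-γ * t) := by positivity
    have h3 : γ * Real.exp (-γ * t) * (r * Real.exp (κ * t) * D + btil) = g t := by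
      have hxy : Real.exp (-γ * t) * Real.exp (κ * t) = Real.exp (-(γ - κ) * t) := by
        rw [← Real.exp_add]; ring_nf
      simp only [hg]
      rw [← hxy]; ring
    calc ∑ i, f i t = γ * Real.exp (-γ * t) * ∑ i, p i (S t x) * dist (w i (S t x)) x₀ := h1
      _ ≤ γ * Real.exp (-γ * t) * (r * Real.exp (κ * t) * D + btil) :=
          mul_le_mul_of_nonneg_left (hsum t ht) h2.le
      _ = g t := h3
  have hfle : ∀ i, ∀ t : ℝ, 0 ≤ t → f i t ≤ g t := by
    intro i t ht
    have h0 : ∀ j, 0 ≤ f j t := fun j => by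
      have := hp0 j (S t x); have := dist_nonneg (x := w j (S t x)) (y := x₀)
      have he : (0:ℝ) ≤ Real.exp (-γ * t) := (Real.exp_pos _).le
      positivity
    calc f i t ≤ ∑ j, f j t := Finset.single_le_sum (fun j _ => h0 j) (Finset.mem_univ i)
      _ ≤ g t := hle t ht
  have hfmeas : ∀ i, Continuous (f i) := by
    intro i
    simp only [hf]
    fun_prop
  have hfint : ∀ i, IntegrableOn (f i) (Set.Ioi (0:ℝ)) := by
    intro i
    refine hgint.mono' ((hfmeas i).aestronglyMeasurable.restrict) ?_
    filter_upwards [ae_restrict_mem measurableSet_Ioi] with t ht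
    have ht' : (0:ℝ) ≤ t := le_of_lt ht
    have h0 : 0 ≤ f i t := by
      have := hp0 i (S t x); have := dist_nonneg (x := w i (S t x)) (y := x₀)
      have he : (0:ℝ) ≤ Real.exp (-γ * t) := (Real.exp_pos _).le
      positivity
    rw [Real.norm_eq_abs, abs_of_nonneg h0]
    exact hfle i t ht'
  have hsumint : IntegrableOn (fun t => ∑ i, f i t) (Set.Ioi (0:ℝ)) :=
    integrable_finset_sum _ fun i _ => hfint i
  have step1 : ∑ i, ∫ t in Set.Ioi (0:ℝ), f i t = ∫ t in Set.Ioi (0:ℝ), ∑ i, f i t :=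
    (integral_finset_sum _ fun i _ => hfint i).symm
  have step2 : ∫ t in Set.Ioi (0:ℝ), ∑ i, f i t ≤ ∫ t in Set.Ioi (0:ℝ), g t := by
    apply setIntegral_mono_on hsumint hgint measurableSet_Ioi
    intro t ht
    exact hle t (le_of_lt ht)
  have step3 : ∫ t in Set.Ioi (0:ℝ), g t = r * D * γ * (γ - κ)⁻¹ + btil := by
    rw [hg, integral_add ((exp_neg_integrableOn_Ioi 0 hγκ).const_mul _)
      ((exp_neg_integrableOn_Ioi 0 hγ0).const_mul _), integral_const_mul, integral_const_mul,
      stmt8_aux_exp _ hγκ, stmt8_aux_exp _ hγ0]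
    field_simp
  have hbN : btil ≤ (N : ℝ) * btil := by
    have h1 : (1:ℝ) ≤ (N : ℝ) := by exact_mod_cast hN
    nlinarith
  calc ∑ i, ∫ t in Set.Ioi (0:ℝ), f i t ≤ ∫ t in Set.Ioi (0:ℝ), g t := step1 ▸ step2
    _ = r * D * γ * (γ - κ)⁻¹ + btil := step3
    _ ≤ r * γ * (γ - κ)⁻¹ * D + (N : ℝ) * btil := by nlinarith
end

section
/- Define X ⊂ ℓ^∞ as the image of the map 𝐱(i, j, k) = (i, 0, …, 0, 2^{−k}, 2^{−k}, …) (with j zeros after the first coordinate, and 2^{−∞} := 0), for (i,j,k) ∈ ℕ × ℕ × (ℕ ∪ {∞}). Then X is a closed subset of ℓ^∞ (with the supremum norm). -/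
open scoped ENat

/-- `2^{−k}` for `k ∈ ℕ ∪ {∞}`, with `2^{−∞} = 0`. -/
noncomputable def pow2inv (k : ℕ∞) : ℝ := if k = ⊤ then 0 else (2 : ℝ)⁻¹ ^ k.toNat

/-- The sequence `𝐱(i,j,k) = (i, 0,…,0 (j zeros), 2^{−k}, 2^{−k}, …)`. -/
noncomputable def xseq (i j : ℕ) (k : ℕ∞) : ℕ → ℝ :=
  fun n => if n = 0 then (i : ℝ) else if n ≤ j then 0 else pow2inv k

lemma pow2inv_nonneg (k : ℕ∞) : 0 ≤ pow2inv k := by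
  unfold pow2inv; split
  · exact le_rfl
  · positivity

lemma pow2inv_half {k k' : ℕ∞} (h : pow2inv k < pow2inv k') :
    pow2inv k ≤ pow2inv k' / 2 := by
  have hk' : k' ≠ ⊤ := by
    intro h'
    have h1 := pow2inv_nonneg k
    have h0 : pow2inv k' = 0 := by simp [pow2inv, h']
    rw [h0] at h; linarith
  rcases eq_or_ne k ⊤ with hk | hk
  · have h1 := pow2inv_nonneg k'
    have h0 : pow2inv k = 0 := by simp [pow2inv, hk]
    rw [h0]; linarith
  · simp only [pow2inv, if_neg hk, if_neg hk'] at h ⊢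
    have hb : k'.toNat < k.toNat := by
      have := (pow_lt_pow_iff_right_of_lt_one₀ (by norm_num : (0:ℝ) < 2⁻¹) (by norm_num : (2:ℝ)⁻¹ < 1)).mp h
      exact this
    calc (2:ℝ)⁻¹ ^ k.toNat ≤ (2:ℝ)⁻¹ ^ (k'.toNat + 1) := by
          apply pow_le_pow_of_le_one (by norm_num) (by norm_num) (by omega)
      _ = (2:ℝ)⁻¹ ^ k'.toNat / 2 := by ring

lemma xseq_zero (i j : ℕ) (k : ℕ∞) : xseq i j k 0 = i := by simp [xseq]

lemma xseq_tail (i j : ℕ) (k : ℕ∞) {n : ℕ} (h : j < n) : xseq i j k n = pow2inv k := by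
  have h0 : n ≠ 0 := by omega
  simp [xseq, h0, not_le.mpr h]

lemma xseq_abs_le (i j : ℕ) (k : ℕ∞) {n : ℕ} (h : n ≠ 0) : |xseq i j k n| ≤ pow2inv k := by
  unfold xseq
  rw [if_neg h]
  split
  · simpa using pow2inv_nonneg k
  · rw [abs_of_nonneg (pow2inv_nonneg k)]

lemma xseq_congr (i j : ℕ) {k k' : ℕ∞} (h : pow2inv k = pow2inv k') :
    xseq i j k = xseq i j k' := by
  funext n; unfold xseq; split_ifs <;> simp [h]

lemma nat_eq_of_abs_lt {a b : ℕ} (h : |(a:ℝ) - b| < 1) : a = b := by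
  have hc : ((a:ℝ) - b) = (((a:ℤ) - b : ℤ) : ℝ) := by push_cast; ring
  rw [hc, ← Int.cast_abs] at h
  have h' : |(a:ℤ) - b| < 1 := by exact_mod_cast h
  rw [abs_lt] at h'
  omega

lemma no_two {a b t : ℝ} (ht : 0 < t) (hab : a ≤ b / 2)
    (ha : |a - t| < t/8) (hb : |b - t| < t/8) : False := by
  rw [abs_lt] at ha hb; linarith

set_option synthInstance.maxHeartbeats 1000000
set_option maxHeartbeats 1000000

open Filter Topology

/-- `X = {𝐱(i,j,k) : i,j ∈ ℕ, k ∈ ℕ ∪ {∞}}` is a closed subset of `ℓ^∞`. -/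
theorem stmt13 :
    IsClosed {f : lp (fun _ : ℕ => ℝ) ⊤ |
      ∃ (i j : ℕ) (k : ℕ∞), 1 ≤ i ∧ 1 ≤ j ∧ ∀ n : ℕ, (f : ∀ _ : ℕ, ℝ) n = xseq i j k n} := by
  apply IsSeqClosed.isClosed
  intro F f hF hlim
  choose i j k hi1 hj1 hx using hF
  -- coordinatewise bound by lp distance
  have hcb : ∀ (g h : lp (fun _ : ℕ => ℝ) ⊤) (n : ℕ),
      dist ((g : ℕ → ℝ) n) ((h : ℕ → ℝ) n) ≤ dist g h := by
    intro g h n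
    have h1 := lp.norm_apply_le_norm (E := fun _ : ℕ => ℝ) (p := ⊤)
      ENNReal.top_ne_zero (g - h) n
    have e : ((g - h : lp (fun _ : ℕ => ℝ) ⊤) : ℕ → ℝ) n = (g : ℕ → ℝ) n - (h : ℕ → ℝ) n := by
      rw [lp.coeFn_sub]; rfl
    rw [dist_eq_norm, dist_eq_norm, ← e]
    exact h1
  -- pointwise convergence
  have hptd : ∀ n : ℕ, Tendsto (fun m => (F m : ℕ → ℝ) n) atTop (𝓝 ((f : ℕ → ℝ) n)) := by
    intro n
    rw [tendsto_iff_dist_tendsto_zero]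
    apply squeeze_zero (fun m => dist_nonneg) (fun m => hcb (F m) f n)
    exact tendsto_iff_dist_tendsto_zero.mp hlim
  have hFc : CauchySeq F := hlim.cauchySeq
  set t : ℕ → ℝ := fun m => pow2inv (k m) with ht_def
  have hcoord : ∀ m n, j m < n → (F m : ℕ → ℝ) n = t m := by
    intro m n h
    rw [hx m n, xseq_tail _ _ _ h]
  -- t is Cauchy
  have htc : CauchySeq t := by
    rw [Metric.cauchySeq_iff]
    intro ε hε
    obtain ⟨N, hN⟩ := Metric.cauchySeq_iff.mp hFc ε hε
    refine ⟨N, fun m hm m' hm' => ?_⟩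
    have e1 : (F m : ℕ → ℝ) (j m + j m' + 1) = t m := hcoord m _ (by omega)
    have e2 : (F m' : ℕ → ℝ) (j m + j m' + 1) = t m' := hcoord m' _ (by omega)
    calc dist (t m) (t m') = dist ((F m : ℕ → ℝ) (j m + j m' + 1))
          ((F m' : ℕ → ℝ) (j m + j m' + 1)) := by rw [e1, e2]
      _ ≤ dist (F m) (F m') := hcb _ _ _
      _ < ε := hN m hm m' hm'
  obtain ⟨T, hT⟩ := cauchySeq_tendsto_of_complete htc
  -- eventual constancy of i
  have hi0 : Tendsto (fun m => ((i m : ℝ))) atTop (𝓝 ((f : ℕ → ℝ) 0)) := by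
    apply (hptd 0).congr
    intro m
    rw [hx m 0, xseq_zero]
  obtain ⟨Ni, hNi⟩ := Metric.tendsto_atTop.mp hi0 (1/2) (by norm_num)
  have hieq : ∀ m, Ni ≤ m → i m = i Ni := by
    intro m hm
    have h1 := hNi m hm
    have h2 := hNi Ni le_rfl
    rw [Real.dist_eq] at h1 h2
    apply nat_eq_of_abs_lt
    rw [abs_lt] at h1 h2 ⊢
    constructor <;> linarith
  have hf0 : (f : ℕ → ℝ) 0 = (i Ni : ℝ) := by
    refine tendsto_nhds_unique (hptd 0) ?_
    apply Tendsto.congr' _ (tendsto_const_nhds)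
    filter_upwards [eventually_ge_atTop Ni] with m hm
    rw [hx m 0, xseq_zero, hieq m hm]
  rcases eq_or_lt_of_le (ge_of_tendsto' hT (fun m => pow2inv_nonneg (k m))) with hT0 | hT0
  · -- T = 0 : limit is xseq (i Ni) 1 ⊤
    refine ⟨i Ni, 1, ⊤, hi1 Ni, le_rfl, fun n => ?_⟩
    rcases Nat.eq_zero_or_pos n with hn | hn
    · subst hn; rw [xseq_zero]; exact hf0
    · have hn0 : n ≠ 0 := by omega
      have h0 : (f : ℕ → ℝ) n = 0 := by
        refine tendsto_nhds_unique (hptd n) ?_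
        apply squeeze_zero_norm (fun m => ?_) (hT0 ▸ hT)
        rw [hx m n]
        exact xseq_abs_le _ _ _ hn0
      rw [h0]
      simp [xseq, hn0, pow2inv]
  · -- T > 0 : everything eventually constant
    obtain ⟨M, hM⟩ := Metric.tendsto_atTop.mp hT (T/8) (by linarith)
    have hteq : ∀ m, M ≤ m → t m = t M := by
      intro m hm
      by_contra hne
      rcases lt_or_gt_of_ne hne with hlt | hgt
      · exact no_two hT0 (pow2inv_half hlt)
          (by rw [← Real.dist_eq]; exact hM m hm)
          (by rw [← Real.dist_eq]; exact hM M le_rfl)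
      · exact no_two hT0 (pow2inv_half hgt)
          (by rw [← Real.dist_eq]; exact hM M le_rfl)
          (by rw [← Real.dist_eq]; exact hM m hm)
    have htT : t M = T := by
      refine tendsto_nhds_unique ?_ hT
      apply Tendsto.congr' _ (tendsto_const_nhds)
      filter_upwards [eventually_ge_atTop M] with m hm
      exact (hteq m hm).symm
    -- eventual constancy of j
    obtain ⟨Nj, hNj⟩ := Metric.cauchySeq_iff.mp hFc T hT0
    set L := max (max M Nj) Ni with hL
    have hjeq : ∀ m, L ≤ m → j m = j L := by
      intro m hm
      by_contra hne
      have hLm : M ≤ L := le_trans (le_max_left _ _) (le_max_left _ _)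
      have hLn : Nj ≤ L := le_trans (le_max_right _ _) (le_max_left _ _)
      have key : ∀ a b : ℕ, M ≤ a → M ≤ b → Nj ≤ a → Nj ≤ b → j a < j b → False := by
        intro a b ha hb ha' hb' hab
        have e1 : (F a : ℕ → ℝ) (j a + 1) = T := by
          rw [hcoord a _ (by omega), hteq a ha, htT]
        have e2 : (F b : ℕ → ℝ) (j a + 1) = 0 := by
          rw [hx b]
          simp [xseq, Nat.succ_ne_zero, show j a + 1 ≤ j b by omega]
        have h3 : dist ((F a : ℕ → ℝ) (j a + 1)) ((F b : ℕ → ℝ) (j a + 1)) < T :=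
          lt_of_le_of_lt (hcb _ _ _) (hNj a ha' b hb')
        rw [e1, e2, Real.dist_eq] at h3
        simp [abs_of_pos hT0] at h3
      rcases lt_or_gt_of_ne hne with hlt | hgt
      · exact key m L (le_trans hLm hm) hLm (le_trans hLn hm) hLn hlt
      · exact key L m hLm (le_trans hLm hm) hLn (le_trans hLn hm) hgt
    -- conclude
    refine ⟨i Ni, j L, k L, hi1 Ni, hj1 L, fun n => ?_⟩
    refine tendsto_nhds_unique (hptd n) ?_
    apply Tendsto.congr' _ (tendsto_const_nhds)
    filter_upwards [eventually_ge_atTop L] with m hm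
    have hiL : Ni ≤ L := le_max_right _ _
    have hML : M ≤ L := le_trans (le_max_left _ _) (le_max_left _ _)
    rw [hx m n, hieq m (le_trans hiL hm), ← hieq L hiL, hjeq m hm]
    exact congrFun (xseq_congr (i L) (j L) (show pow2inv (k L) = pow2inv (k m) by
        change t L = t m
        rw [hteq m (le_trans hML hm), hteq L hML])) n
end

section
/- For the Feller property of the counterexample chain: let f be a bounded continuous function on X ⊂ ℓ^∞, fix i ∈ ℕ, and let xₙ = 𝐱(i, jₙ, kₙ) with kₙ → ∞, so xₙ → x₀ = 𝐱(i, 1, ∞) in ℓ^∞ along a suitable subsequence with jₙ = 1. Then Pf(xₙ) = p₁(i,kₙ) f(𝐱(1, jₙ+1, 1)) + p₂(kₙ) f(𝐱(i, jₙ+1, kₙ+1)) + (1 − p₁(i,kₙ) − p₂(kₙ)) f(𝐱(i+1, jₙ+1, kₙ)) converges to f(𝐱(i+1, 1, ∞)) = Pf(x₀) as n → ∞ (taking jₙ = 1 for all n). -/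
open Filter Topology
open scoped ENat ENNReal

lemma xseq_memℓp (i j : ℕ) (k : ℕ∞) : Memℓp (xseq i j k) (⊤ : ℝ≥0∞) := by
  refine memℓp_infty ⟨max (i : ℝ) 1, ?_⟩
  rintro y ⟨n, rfl⟩
  simp only [xseq, pow2inv, Real.norm_eq_abs]
  by_cases h0 : n = 0
  · rw [if_pos h0, abs_of_nonneg (show (0 : ℝ) ≤ (i : ℝ) from Nat.cast_nonneg i)]
    exact le_max_left _ _
  · rw [if_neg h0]
    by_cases hj : n ≤ j
    · rw [if_pos hj, abs_zero]
      exact le_trans zero_le_one (le_max_right _ _)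
    · rw [if_neg hj]
      refine le_trans ?_ (le_max_right (i : ℝ) 1)
      by_cases hk : k = ⊤
      · rw [if_pos hk, abs_zero]; exact zero_le_one
      · rw [if_neg hk, abs_of_nonneg (by positivity)]
        exact pow_le_one₀ (by norm_num) (by norm_num)

/-- The element `𝐱(i,j,k)` of `ℓ^∞`. -/
noncomputable def xelem (i j : ℕ) (k : ℕ∞) : lp (fun _ : ℕ => ℝ) ⊤ :=
  ⟨xseq i j k, xseq_memℓp i j k⟩

/-- `p₂(k) = k^{−4}`, with `p₂(∞) = 0`. -/
noncomputable def p2 (k : ℕ∞) : ℝ := if k = ⊤ then 0 else ((k.toNat : ℝ))⁻¹ ^ 4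

/-- `p₁(i,k) = 1 − p₂(k)` if `k < i!`, `p₁(i,k) = p₂(k)` if `k ≥ i!`, `p₁(i,∞) = 0`. -/
noncomputable def p1 (i : ℕ) (k : ℕ∞) : ℝ :=
  if k = ⊤ then 0 else if k < (Nat.factorial i : ℕ∞) then 1 - p2 k else p2 k


lemma pow2inv_coe (k : ℕ) : pow2inv (k : ℕ∞) = (2:ℝ)⁻¹ ^ k := by
  simp [pow2inv]

lemma xelem_norm_sub_le (i j : ℕ) (k : ℕ) :
    ‖xelem i j (k : ℕ∞) - xelem i j ⊤‖ ≤ (2:ℝ)⁻¹ ^ k := by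
  apply lp.norm_le_of_forall_le (by positivity)
  intro n
  have : (xelem i j (k : ℕ∞) - xelem i j ⊤) n = xseq i j k n - xseq i j ⊤ n := rfl
  rw [this]
  by_cases h0 : n = 0
  · simp [xseq, h0]
  · by_cases hj : n ≤ j
    · simp [xseq, h0, hj]
    · simp only [xseq, if_neg h0, if_neg hj, pow2inv, if_pos rfl,
        if_neg (ENat.coe_ne_top k), if_true, sub_zero, Real.norm_eq_abs, ENat.toNat_coe]
      rw [abs_of_nonneg (by positivity)]

lemma xelem_tendsto (i j : ℕ) (kn : ℕ → ℕ) (hkn : Tendsto kn atTop atTop) :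
    Tendsto (fun n => xelem i j (kn n : ℕ∞)) atTop (𝓝 (xelem i j ⊤)) := by
  rw [tendsto_iff_norm_sub_tendsto_zero]
  have h2 : Tendsto (fun n => (2:ℝ)⁻¹ ^ (kn n)) atTop (𝓝 0) :=
    (tendsto_pow_atTop_nhds_zero_of_lt_one (by norm_num) (by norm_num)).comp hkn
  refine squeeze_zero (fun n => norm_nonneg _) (fun n => xelem_norm_sub_le i j (kn n)) h2

lemma p2_tendsto (kn : ℕ → ℕ) (hkn : Tendsto kn atTop atTop) :
    Tendsto (fun n => p2 (kn n : ℕ∞)) atTop (𝓝 0) := by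
  have : ∀ n, p2 (kn n : ℕ∞) = ((kn n : ℝ))⁻¹ ^ 4 := by
    intro n; simp [p2]
  simp only [this]
  have h1 : Tendsto (fun n => ((kn n : ℝ))⁻¹) atTop (𝓝 0) :=
    tendsto_inv_atTop_zero.comp ((tendsto_natCast_atTop_atTop (R := ℝ)).comp hkn)
  simpa using h1.pow 4

lemma p1_eventually_eq (i : ℕ) (kn : ℕ → ℕ) (hkn : Tendsto kn atTop atTop) :
    ∀ᶠ n in atTop, p1 i (kn n : ℕ∞) = p2 (kn n : ℕ∞) := by
  filter_upwards [hkn.eventually_ge_atTop (Nat.factorial i)] with n hn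
  simp only [p1]
  rw [if_neg (by simp), if_neg]
  exact not_lt.mpr (by exact_mod_cast hn)

lemma p1_tendsto (i : ℕ) (kn : ℕ → ℕ) (hkn : Tendsto kn atTop atTop) :
    Tendsto (fun n => p1 i (kn n : ℕ∞)) atTop (𝓝 0) :=
  (p2_tendsto kn hkn).congr' ((p1_eventually_eq i kn hkn).mono fun n h => h.symm)

/-- For the counterexample chain, with `xₙ = 𝐱(i, 1, kₙ)` and `kₙ → ∞`,
`Pf(xₙ) = p₁(i,kₙ) f(𝐱(1,2,1)) + p₂(kₙ) f(𝐱(i,2,kₙ+1)) + (1−p₁(i,kₙ)−p₂(kₙ)) f(𝐱(i+1,2,kₙ))`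
converges to `f(𝐱(i+1,2,∞)) = Pf(x₀)` for every bounded continuous `f` on `ℓ^∞`. -/
theorem stmt16 (i : ℕ) (hi : 1 ≤ i)
    (f : lp (fun _ : ℕ => ℝ) ⊤ → ℝ) (hf : Continuous f)
    (Cf : ℝ) (hfb : ∀ x, |f x| ≤ Cf)
    (kn : ℕ → ℕ) (hkn : Tendsto kn atTop atTop) :
    Tendsto (fun n =>
        p1 i (kn n) * f (xelem 1 2 1)
          + p2 (kn n) * f (xelem i 2 ((kn n : ℕ∞) + 1))
          + (1 - p1 i (kn n) - p2 (kn n)) * f (xelem (i + 1) 2 (kn n)))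
      atTop (𝓝 (f (xelem (i + 1) 2 ⊤))) := by
  have hp1 := p1_tendsto i kn hkn
  have hp2 := p2_tendsto kn hkn
  have hCf0 : 0 ≤ Cf := le_trans (abs_nonneg _) (hfb (xelem 1 2 1))
  have h1 : Tendsto (fun n => p1 i (kn n) * f (xelem 1 2 1)) atTop (𝓝 0) := by
    simpa using hp1.mul_const (f (xelem 1 2 1))
  have h2 : Tendsto (fun n => p2 (kn n) * f (xelem i 2 ((kn n : ℕ∞) + 1))) atTop (𝓝 0) := by
    refine squeeze_zero_norm (fun n => ?_) (by simpa using (hp2.abs.mul_const Cf))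
    rw [Real.norm_eq_abs, abs_mul]
    exact mul_le_mul_of_nonneg_left (hfb _) (abs_nonneg _)
  have h3 : Tendsto (fun n => (1 - p1 i (kn n) - p2 (kn n)) * f (xelem (i + 1) 2 (kn n)))
      atTop (𝓝 (f (xelem (i + 1) 2 ⊤))) := by
    have hc : Tendsto (fun n => 1 - p1 i (kn n : ℕ∞) - p2 (kn n : ℕ∞)) atTop (𝓝 1) := by
      have := (tendsto_const_nhds (x := (1:ℝ)) (f := atTop)).sub hp1 |>.sub hp2
      simpa using this
    have hfc : Tendsto (fun n => f (xelem (i + 1) 2 (kn n : ℕ∞))) atTop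
        (𝓝 (f (xelem (i + 1) 2 ⊤))) :=
      (hf.tendsto _).comp (xelem_tendsto (i + 1) 2 kn hkn)
    simpa using hc.mul hfc
  have := (h1.add h2).add h3
  simpa using this
end
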